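/- arXiv:0908.0137 — 2 statements merged into one kernel-verified Lean document; each statement's English description precedes it below -/
import Mathlib

section
/- Let M be an n×n symmetric matrix with eigenvalues λ₁ > λ₂ > … and ‖M‖₂ = λ₁, let u₁ be the unit leading eigenvector, E the subsampling residual with sampling probability p, and R the reduced resolvent of M at λ₁. Then E[‖R E u₁‖₂²] ≤ (1/(1 − λ₂/λ₁)²) · ‖u₁‖_∞² · NumRank(M)/p, where NumRank(M) = ‖M‖_F²/‖M‖₂² is the numerical rank of M. -/
open MeasureTheory ProbabilityTheory Filter Matrix
open scoped ENNReal NNReal BigOperators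

/-- The spectral norm (largest singular value) of a real matrix, i.e. the operator norm
of the induced map between Euclidean spaces. -/
noncomputable def matSpectralNorm {m n : Type*} [Fintype m] [Fintype n] [DecidableEq n]
    (A : Matrix m n ℝ) : ℝ :=
  ‖LinearMap.toContinuousLinearMap (Matrix.toEuclideanLin A)‖

/-- The Euclidean norm of a vector. -/
noncomputable def euclNorm {n : Type*} [Fintype n] (x : n → ℝ) : ℝ :=
  Real.sqrt (∑ i, x i ^ 2)

/-- The sup norm `max_{i,j} |A i j|` of a matrix. -/
noncomputable def supNorm {m n : Type*} [Fintype m] [Fintype n] (A : Matrix m n ℝ) : ℝ :=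
  ‖(fun i j => A i j : m → n → ℝ)‖

/-- An `m × m` Bernoulli-type symmetric random matrix with parameter `p`: the
on-or-above-diagonal entries are independent, equal to `√((1-p)/p)` with probability `p`
and to `-√(p/(1-p))` with probability `1-p`. -/
def IsBernoulliType {Ω : Type*} [MeasurableSpace Ω] (P : Measure Ω) {m : ℕ} (p : ℝ)
    (C : Ω → Matrix (Fin m) (Fin m) ℝ) : Prop :=
  (∀ ω, (C ω).IsSymm) ∧
  (∀ i j, Measurable fun ω => C ω i j) ∧
  iIndepFun
    (fun (q : {q : Fin m × Fin m // q.1 ≤ q.2}) ω => C ω q.val.1 q.val.2) P ∧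
  ∀ i j : Fin m, i ≤ j →
    P {ω | C ω i j = Real.sqrt ((1 - p) / p)} = ENNReal.ofReal p ∧
    P {ω | C ω i j = -Real.sqrt (p / (1 - p))} = ENNReal.ofReal (1 - p)

/-- `E` is the subsampling residual `E = S - M` of the symmetric matrix `M` with sampling
probability `p`; equivalently `E = √((1-p)/p) • (M ∘ C)` with `C` Bernoulli-type. -/
def IsSubsampleResidual {Ω : Type*} [MeasurableSpace Ω] (P : Measure Ω) {n : ℕ} (p : ℝ)
    (M : Matrix (Fin n) (Fin n) ℝ) (E : Ω → Matrix (Fin n) (Fin n) ℝ) : Prop :=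
  ∃ C : Ω → Matrix (Fin n) (Fin n) ℝ, IsBernoulliType P p C ∧
    ∀ ω, E ω = Real.sqrt ((1 - p) / p) • Matrix.hadamard M (C ω)

/-!
The reduced resolvent acts on the orthonormal eigenvectors `u j`, `j ≠ 1`, by the factors
`(λ_j - λ₁)⁻¹`, all of modulus at most `(λ₁ - λ₂)⁻¹`; by Bessel's inequality
`‖R y‖₂ ≤ ‖y‖₂ / (λ₁ - λ₂)` for every `y`. The normalised Bernoulli entries have mean `0` and
variance `1`, and distinct entries of one row are independent, so
`E ‖E x‖₂² = (1 - p)/p · ∑_{k,l} M_{kl}² x_l² ≤ ‖x‖_∞² ‖M‖_F² / p`. Since `‖M‖₂ = λ₁`, the factor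
`(λ₁ - λ₂)⁻²` equals `(1 - λ₂/λ₁)⁻² / ‖M‖₂²`.
-/

lemma euclNorm_eq_norm_toLp {n : Type*} [Fintype n] (x : n → ℝ) :
    euclNorm x = ‖WithLp.toLp 2 x‖ := by
  simp [euclNorm, EuclideanSpace.norm_eq]

lemma euclNorm_sq {n : Type*} [Fintype n] (x : n → ℝ) : euclNorm x ^ 2 = ∑ i, x i ^ 2 :=
  Real.sq_sqrt (Finset.sum_nonneg fun i _ => sq_nonneg (x i))

lemma orthonormal_toLp {ι n : Type*} [Fintype n] {u : ι → n → ℝ}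
    (hunit : ∀ i, euclNorm (u i) = 1) (horth : ∀ i j, i ≠ j → ∑ k, u i k * u j k = 0) :
    Orthonormal ℝ fun i => WithLp.toLp 2 (u i) := by
  refine ⟨fun i => by rw [← euclNorm_eq_norm_toLp, hunit], fun i j hij => ?_⟩
  simpa [PiLp.inner_apply, mul_comm] using horth i j hij

theorem Orthonormal.norm_sum_smul_inner_smul_sq_le {ι E : Type*} [NormedAddCommGroup E]
    [InnerProductSpace ℝ E] {v : ι → E} (hv : Orthonormal ℝ v) (s : Finset ι) {c : ι → ℝ}
    {K : ℝ} (hc : ∀ j ∈ s, |c j| ≤ K) (x : E) :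
    ‖∑ j ∈ s, (c j * inner ℝ (v j) x) • v j‖ ^ 2 ≤ K ^ 2 * ‖x‖ ^ 2 := by
  calc ‖∑ j ∈ s, (c j * inner ℝ (v j) x) • v j‖ ^ 2
      = ∑ j ∈ s, c j ^ 2 * inner ℝ (v j) x ^ 2 := by
        rw [← real_inner_self_eq_norm_sq, hv.inner_sum]
        exact Finset.sum_congr rfl fun j _ => by simp only [conj_trivial]; ring
    _ ≤ ∑ j ∈ s, K ^ 2 * ‖inner ℝ (v j) x‖ ^ 2 := by
        refine Finset.sum_le_sum fun j hj => ?_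
        rw [Real.norm_eq_abs, sq_abs]
        exact mul_le_mul_of_nonneg_right (sq_le_sq' (neg_le_of_abs_le (hc j hj))
          (le_of_abs_le (hc j hj))) (sq_nonneg _)
    _ ≤ K ^ 2 * ‖x‖ ^ 2 := by
        rw [← Finset.mul_sum]
        exact mul_le_mul_of_nonneg_left (hv.sum_inner_products_le x) (sq_nonneg K)

lemma sum_smul_vecMulVec_mulVec {ι n : Type*} [Fintype n] (s : Finset ι) (c : ι → ℝ)
    (u : ι → n → ℝ) (y : n → ℝ) :
    (∑ j ∈ s, c j • vecMulVec (u j) (u j)) *ᵥ y = ∑ j ∈ s, (c j * (u j ⬝ᵥ y)) • u j := by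
  simp only [Matrix.sum_mulVec, Matrix.smul_mulVec, vecMulVec_mulVec, op_smul_eq_smul, smul_smul]

theorem euclNorm_sum_smul_vecMulVec_mulVec_sq_le {ι n : Type*} [Fintype n] {u : ι → n → ℝ}
    (hu : Orthonormal ℝ fun i => WithLp.toLp 2 (u i)) (s : Finset ι) {c : ι → ℝ} {K : ℝ}
    (hc : ∀ j ∈ s, |c j| ≤ K) (y : n → ℝ) :
    euclNorm ((∑ j ∈ s, c j • vecMulVec (u j) (u j)) *ᵥ y) ^ 2 ≤ K ^ 2 * euclNorm y ^ 2 := by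
  have hinner : ∀ j, u j ⬝ᵥ y = inner ℝ (WithLp.toLp 2 (u j)) (WithLp.toLp 2 y) := fun j => by
    simp [PiLp.inner_apply, dotProduct, mul_comm]
  simp only [sum_smul_vecMulVec_mulVec, euclNorm_eq_norm_toLp, WithLp.toLp_sum,
    WithLp.toLp_smul, hinner]
  exact hu.norm_sum_smul_inner_smul_sq_le s hc _

lemma Antitone.abs_inv_sub_le_inv_sub {ι : Type*} [Preorder ι] {lam : ι → ℝ}
    (hlam : Antitone lam) {i₀ i₁ j : ι} (hgap : lam i₁ < lam i₀) (hj : i₁ ≤ j) :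
    |(lam j - lam i₀)⁻¹| ≤ (lam i₀ - lam i₁)⁻¹ := by
  have hj' : lam j ≤ lam i₁ := hlam hj
  rw [abs_inv, abs_of_neg (by linarith), neg_sub]
  exact inv_anti₀ (by linarith) (by linarith)

theorem euclNorm_reducedResolvent_mulVec_sq_le {n : ℕ} (hn : 1 < n) {lam : Fin n → ℝ}
    {u : Fin n → Fin n → ℝ} (hunit : ∀ i, euclNorm (u i) = 1)
    (horth : ∀ i j, i ≠ j → ∑ k, u i k * u j k = 0) (hsorted : StrictAnti lam) (y : Fin n → ℝ) :
    euclNorm ((∑ j ∈ Finset.univ.erase ⟨0, Nat.zero_lt_of_lt hn⟩,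
        (lam j - lam ⟨0, Nat.zero_lt_of_lt hn⟩)⁻¹ • vecMulVec (u j) (u j)) *ᵥ y) ^ 2 ≤
      (lam ⟨0, Nat.zero_lt_of_lt hn⟩ - lam ⟨1, hn⟩)⁻¹ ^ 2 * euclNorm y ^ 2 := by
  have hgap := hsorted (Fin.mk_lt_mk.mpr zero_lt_one :
    (⟨0, Nat.zero_lt_of_lt hn⟩ : Fin n) < ⟨1, hn⟩)
  refine euclNorm_sum_smul_vecMulVec_mulVec_sq_le (orthonormal_toLp hunit horth) _
    (fun j hj => hsorted.antitone.abs_inv_sub_le_inv_sub hgap ?_) y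
  exact Fin.mk_le_of_le_val
    (Nat.one_le_iff_ne_zero.mpr fun h => Finset.ne_of_mem_erase hj (Fin.ext h))

lemma sum_sum_mul_sq_le {n : Type*} [Fintype n] (M : Matrix n n ℝ) (x : n → ℝ) :
    ∑ k, ∑ l, (M k l * x l) ^ 2 ≤ ‖x‖ ^ 2 * ∑ k, ∑ l, M k l ^ 2 := by
  rw [Finset.mul_sum]
  refine Finset.sum_le_sum fun k _ => ?_
  rw [Finset.mul_sum]
  refine Finset.sum_le_sum fun l _ => ?_
  rw [mul_pow, mul_comm]
  refine mul_le_mul_of_nonneg_right ?_ (sq_nonneg _)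
  simpa only [Real.norm_eq_abs, sq_abs] using
    pow_le_pow_left₀ (norm_nonneg _) (norm_le_pi_norm x l) 2

lemma matSpectralNorm_eq_zero_iff {m n : Type*} [Fintype m] [Fintype n] [DecidableEq n]
    {A : Matrix m n ℝ} : matSpectralNorm A = 0 ↔ A = 0 := by
  simp [matSpectralNorm]

section TwoPoint

variable {Ω : Type*} [MeasurableSpace Ω] {P : Measure Ω} {X : Ω → ℝ} {a b p : ℝ}

lemma ae_eq_or_eq_of_measure_eq [IsProbabilityMeasure P] (hX : Measurable X) (hab : a ≠ b)
    (hp0 : 0 ≤ p) (hp1 : p ≤ 1)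
    (ha : P {ω | X ω = a} = ENNReal.ofReal p) (hb : P {ω | X ω = b} = ENNReal.ofReal (1 - p)) :
    ∀ᵐ ω ∂P, X ω = a ∨ X ω = b := by
  have hmeas : ∀ c, MeasurableSet {ω | X ω = c} := fun c => hX (measurableSet_singleton c)
  have hdisj : Disjoint {ω | X ω = a} {ω | X ω = b} :=
    Set.disjoint_left.mpr fun ω ha hb => hab (ha.symm.trans hb)
  change ∀ᵐ ω ∂P, ω ∈ {ω | X ω = a} ∪ {ω | X ω = b}
  rw [ae_mem_iff_measure_eq ((hmeas a).union (hmeas b)).nullMeasurableSet,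
    measure_union hdisj (hmeas b), ha, hb, ← ENNReal.ofReal_add hp0 (by linarith), measure_univ]
  simp

lemma integral_comp_of_measure_eq [IsProbabilityMeasure P] (hX : Measurable X) (hab : a ≠ b)
    (hp0 : 0 ≤ p) (hp1 : p ≤ 1)
    (ha : P {ω | X ω = a} = ENNReal.ofReal p) (hb : P {ω | X ω = b} = ENNReal.ofReal (1 - p))
    (f : ℝ → ℝ) : ∫ ω, f (X ω) ∂P = p * f a + (1 - p) * f b := by
  have hmeas : ∀ c, MeasurableSet {ω | X ω = c} := fun c => hX (measurableSet_singleton c)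
  have hsplit : (fun ω => f (X ω)) =ᵐ[P] fun ω =>
      {ω | X ω = a}.indicator (fun _ => f a) ω + {ω | X ω = b}.indicator (fun _ => f b) ω := by
    filter_upwards [ae_eq_or_eq_of_measure_eq hX hab hp0 hp1 ha hb] with ω hω
    rcases hω with h | h
    · simp [Set.indicator, h, hab]
    · simp [Set.indicator, h, hab.symm]
  rw [integral_congr_ae hsplit, integral_add ((integrable_const _).indicator (hmeas a))
    ((integrable_const _).indicator (hmeas b)), integral_indicator_const _ (hmeas a),
    integral_indicator_const _ (hmeas b), measureReal_def, measureReal_def, ha, hb,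
    ENNReal.toReal_ofReal hp0, ENNReal.toReal_ofReal (by linarith), smul_eq_mul, smul_eq_mul]

lemma memLp_of_ae_eq_or_eq [IsFiniteMeasure P] (hX : AEStronglyMeasurable X P)
    (hab : ∀ᵐ ω ∂P, X ω = a ∨ X ω = b) (q : ℝ≥0∞) : MemLp X q P :=
  MemLp.of_bound hX (max |a| |b|) <| hab.mono fun ω h => by
    rcases h with h | h <;> simp [h]

end TwoPoint

lemma sqrt_div_ne_neg_sqrt_div {p : ℝ} (hp0 : 0 < p) (hp1 : p < 1) :
    Real.sqrt ((1 - p) / p) ≠ -Real.sqrt (p / (1 - p)) := by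
  have h₁ : 0 < Real.sqrt ((1 - p) / p) := Real.sqrt_pos.mpr (div_pos (by linarith) hp0)
  have h₂ : 0 < Real.sqrt (p / (1 - p)) := Real.sqrt_pos.mpr (div_pos hp0 (by linarith))
  linarith

namespace IsBernoulliType

variable {Ω : Type*} [MeasurableSpace Ω] {P : Measure Ω} {m : ℕ} {p : ℝ}
  {C : Ω → Matrix (Fin m) (Fin m) ℝ}

lemma apply_min_max (hC : IsBernoulliType P p C) (ω : Ω) (i j : Fin m) :
    C ω (min i j) (max i j) = C ω i j := by
  rcases le_total i j with h | h
  · simp [h]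
  · simp [h, (hC.1 ω).apply i j]

lemma measure_entry (hC : IsBernoulliType P p C) (i j : Fin m) :
    P {ω | C ω i j = Real.sqrt ((1 - p) / p)} = ENNReal.ofReal p ∧
      P {ω | C ω i j = -Real.sqrt (p / (1 - p))} = ENNReal.ofReal (1 - p) := by
  simpa only [hC.apply_min_max] using hC.2.2.2 (min i j) (max i j) min_le_max

lemma indepFun_entry_row (hC : IsBernoulliType P p C) {k l l' : Fin m} (h : l ≠ l') :
    IndepFun (fun ω => C ω k l) (fun ω => C ω k l') P := by
  have hne : Sym2.sortEquiv s(k, l) ≠ Sym2.sortEquiv s(k, l') :=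
    Sym2.sortEquiv.injective.ne (Sym2.congr_right.not.mpr h)
  simpa only [Sym2.sortEquiv_apply_coe, Sym2.inf_mk, Sym2.sup_mk,
    hC.apply_min_max] using hC.2.2.1.indepFun hne

variable [IsProbabilityMeasure P]

lemma integral_comp_entry (hC : IsBernoulliType P p C) (hp0 : 0 < p) (hp1 : p < 1)
    (i j : Fin m) (f : ℝ → ℝ) :
    ∫ ω, f (C ω i j) ∂P =
      p * f (Real.sqrt ((1 - p) / p)) + (1 - p) * f (-Real.sqrt (p / (1 - p))) :=
  integral_comp_of_measure_eq (hC.2.1 i j) (sqrt_div_ne_neg_sqrt_div hp0 hp1) hp0.le hp1.le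
    (hC.measure_entry i j).1 (hC.measure_entry i j).2 f

lemma memLp_entry (hC : IsBernoulliType P p C) (hp0 : 0 < p) (hp1 : p < 1) (i j : Fin m)
    (q : ℝ≥0∞) : MemLp (fun ω => C ω i j) q P :=
  memLp_of_ae_eq_or_eq (hC.2.1 i j).aestronglyMeasurable
    (ae_eq_or_eq_of_measure_eq (hC.2.1 i j) (sqrt_div_ne_neg_sqrt_div hp0 hp1) hp0.le hp1.le
      (hC.measure_entry i j).1 (hC.measure_entry i j).2) q

lemma integral_entry (hC : IsBernoulliType P p C) (hp0 : 0 < p) (hp1 : p < 1) (i j : Fin m) :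
    ∫ ω, C ω i j ∂P = 0 := by
  refine (hC.integral_comp_entry hp0 hp1 i j id).trans ?_
  have hq : 0 < 1 - p := sub_pos.mpr hp1
  have key : p * Real.sqrt ((1 - p) / p) = (1 - p) * Real.sqrt (p / (1 - p)) := by
    rw [← sq_eq_sq₀ (by positivity) (by positivity), mul_pow, mul_pow,
      Real.sq_sqrt (div_pos hq hp0).le, Real.sq_sqrt (div_pos hp0 hq).le]
    field_simp
  simp only [id, key]
  ring

lemma integral_entry_sq (hC : IsBernoulliType P p C) (hp0 : 0 < p) (hp1 : p < 1)
    (i j : Fin m) : ∫ ω, C ω i j ^ 2 ∂P = 1 := by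
  rw [hC.integral_comp_entry hp0 hp1 i j (· ^ 2)]
  simp only [neg_sq, Real.sq_sqrt (div_pos (sub_pos.mpr hp1) hp0).le,
    Real.sq_sqrt (div_pos hp0 (sub_pos.mpr hp1)).le]
  have hq : 1 - p ≠ 0 := (sub_pos.mpr hp1).ne'
  field_simp
  ring

lemma variance_entry (hC : IsBernoulliType P p C) (hp0 : 0 < p) (hp1 : p < 1) (i j : Fin m) :
    Var[fun ω => C ω i j; P] = 1 := by
  rw [variance_eq_sub (hC.memLp_entry hp0 hp1 i j 2)]
  simp only [Pi.pow_apply, hC.integral_entry_sq hp0 hp1, hC.integral_entry hp0 hp1]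
  norm_num

lemma integral_sq_sum_row (hC : IsBernoulliType P p C) (hp0 : 0 < p) (hp1 : p < 1) (k : Fin m)
    (a : Fin m → ℝ) : ∫ ω, (∑ l, a l * C ω k l) ^ 2 ∂P = ∑ l, a l ^ 2 := by
  set Y : Fin m → Ω → ℝ := fun l ω => a l * C ω k l
  have hY : ∀ l ∈ Finset.univ, MemLp (Y l) 2 P := fun l _ =>
    (hC.memLp_entry hp0 hp1 k l 2).const_mul (a l)
  have hmean : ∫ ω, ∑ l, Y l ω ∂P = 0 := by
    rw [integral_finsetSum _ fun l hl => (hY l hl).integrable one_le_two]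
    simp [Y, integral_const_mul, hC.integral_entry hp0 hp1]
  calc ∫ ω, (∑ l, a l * C ω k l) ^ 2 ∂P = Var[∑ l, Y l; P] := by
        rw [variance_eq_sub (memLp_finsetSum' _ hY)]
        simp only [Finset.sum_apply, Pi.pow_apply, hmean]
        simp [Y]
    _ = ∑ l, Var[Y l; P] := IndepFun.variance_sum hY fun l _ l' _ h =>
        (hC.indepFun_entry_row h).comp (measurable_const_mul (a l)) (measurable_const_mul (a l'))
    _ = ∑ l, a l ^ 2 := by
        simp [Y, variance_const_mul, hC.variance_entry hp0 hp1]

end IsBernoulliType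

lemma euclNorm_smul_hadamard_mulVec_sq {n : Type*} [Fintype n] (c : ℝ) (M C : Matrix n n ℝ)
    (x : n → ℝ) :
    euclNorm ((c • hadamard M C) *ᵥ x) ^ 2 = c ^ 2 * ∑ k, (∑ l, M k l * x l * C k l) ^ 2 := by
  rw [euclNorm_sq, Finset.mul_sum]
  refine Finset.sum_congr rfl fun k _ => ?_
  simp only [mulVec, dotProduct, Matrix.smul_apply, hadamard_apply, smul_eq_mul, ← mul_pow,
    Finset.mul_sum]
  congr 1
  exact Finset.sum_congr rfl fun l _ => by ring

namespace IsSubsampleResidual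

variable {Ω : Type*} [MeasurableSpace Ω] {P : Measure Ω} [IsProbabilityMeasure P] {n : ℕ}
  {p : ℝ} {M : Matrix (Fin n) (Fin n) ℝ} {E : Ω → Matrix (Fin n) (Fin n) ℝ}

lemma integrable_euclNorm_mulVec_sq (hE : IsSubsampleResidual P p M E) (hp0 : 0 < p)
    (hp1 : p < 1) (x : Fin n → ℝ) : Integrable (fun ω => euclNorm (E ω *ᵥ x) ^ 2) P := by
  obtain ⟨C, hC, hEC⟩ := hE
  simp only [hEC, euclNorm_smul_hadamard_mulVec_sq]
  refine (integrable_finsetSum _ fun k _ => ?_).const_mul _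
  exact (memLp_finsetSum _ fun l _ => (hC.memLp_entry hp0 hp1 k l 2).const_mul _).integrable_sq

theorem integral_euclNorm_mulVec_sq (hE : IsSubsampleResidual P p M E) (hp0 : 0 < p)
    (hp1 : p < 1) (x : Fin n → ℝ) :
    ∫ ω, euclNorm (E ω *ᵥ x) ^ 2 ∂P = (1 - p) / p * ∑ k, ∑ l, (M k l * x l) ^ 2 := by
  obtain ⟨C, hC, hEC⟩ := hE
  simp only [hEC, euclNorm_smul_hadamard_mulVec_sq]
  rw [integral_const_mul, integral_finsetSum _ fun k _ => (memLp_finsetSum _ fun l _ =>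
    (hC.memLp_entry hp0 hp1 k l 2).const_mul _).integrable_sq,
    Real.sq_sqrt (div_pos (sub_pos.mpr hp1) hp0).le]
  simp only [hC.integral_sq_sum_row hp0 hp1]

end IsSubsampleResidual

/-- Theorem 4 of the paper, numerical-rank bound: with `‖M‖₂ = λ₁`,
`E[‖R E u₁‖₂²] ≤ ‖u₁‖_∞² NumRank(M) / ((1-λ₂/λ₁)² p)`. -/
theorem variance_REu_numRank_bound
    {Ω : Type*} [MeasurableSpace Ω] (P : Measure Ω) [IsProbabilityMeasure P]
    {n : ℕ} (hn : 2 ≤ n)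
    (M : Matrix (Fin n) (Fin n) ℝ) (lam : Fin n → ℝ) (u : Fin n → Fin n → ℝ)
    (p : ℝ) (E : Ω → Matrix (Fin n) (Fin n) ℝ)
    (u1 : Fin n → ℝ) (lam1 lam2 : ℝ) (R : Matrix (Fin n) (Fin n) ℝ)
    (hunit : ∀ i, euclNorm (u i) = 1)
    (horth : ∀ i j : Fin n, i ≠ j → ∑ k, u i k * u j k = 0)
    (hsorted : StrictAnti lam)
    (hlam1 : lam1 = lam ⟨0, by omega⟩) (hlam2 : lam2 = lam ⟨1, by omega⟩)
    (hR : R = ∑ j ∈ Finset.univ.erase (⟨0, by omega⟩ : Fin n),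
      (lam j - lam1)⁻¹ • Matrix.vecMulVec (u j) (u j))
    -- `‖M‖₂ = λ₁`
    (hspec : matSpectralNorm M = lam1)
    (hp0 : 0 < p) (hp1 : p < 1)
    (hE : IsSubsampleResidual P p M E) :
    (∫ ω, (euclNorm ((R * E ω).mulVec u1)) ^ 2 ∂P) ≤
      (1 / (1 - lam2 / lam1) ^ 2) * ‖u1‖ ^ 2 *
        ((∑ i, ∑ j, (M i j) ^ 2) / matSpectralNorm M ^ 2) / p := by
  have hgap : lam2 < lam1 := hlam1 ▸ hlam2 ▸ hsorted (Fin.mk_lt_mk.mpr zero_lt_one)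
  have hR_le : ∀ y, euclNorm (R *ᵥ y) ^ 2 ≤ (lam1 - lam2)⁻¹ ^ 2 * euclNorm y ^ 2 := by
    subst hR hlam1 hlam2
    exact euclNorm_reducedResolvent_mulVec_sq_le hn hunit horth hsorted
  set F := ∑ i, ∑ j, M i j ^ 2
  calc ∫ ω, euclNorm ((R * E ω) *ᵥ u1) ^ 2 ∂P
      ≤ ∫ ω, (lam1 - lam2)⁻¹ ^ 2 * euclNorm (E ω *ᵥ u1) ^ 2 ∂P := by
        refine integral_mono_of_nonneg (ae_of_all _ fun ω => sq_nonneg _)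
          ((hE.integrable_euclNorm_mulVec_sq hp0 hp1 u1).const_mul _) (ae_of_all _ fun ω => ?_)
        simpa only [← mulVec_mulVec] using hR_le (E ω *ᵥ u1)
    _ = (lam1 - lam2)⁻¹ ^ 2 * ((1 - p) / p * ∑ k, ∑ l, (M k l * u1 l) ^ 2) := by
        rw [integral_const_mul, hE.integral_euclNorm_mulVec_sq hp0 hp1]
    _ ≤ (lam1 - lam2)⁻¹ ^ 2 * (1 / p * (‖u1‖ ^ 2 * F)) := by
        gcongr
        · linarith
        · exact sum_sum_mul_sq_le M u1
    _ = 1 / (1 - lam2 / lam1) ^ 2 * ‖u1‖ ^ 2 * (F / matSpectralNorm M ^ 2) / p := by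
        rcases eq_or_ne lam1 0 with h0 | h0
        -- then `M = 0`, and the right-hand side vanishes through division by zero
        · have hF : F = 0 := by simp [F, matSpectralNorm_eq_zero_iff.mp (hspec.trans h0)]
          simp [hF]
        · rw [hspec]
          have hgap_ne : lam1 - lam2 ≠ 0 := sub_ne_zero.mpr hgap.ne'
          field_simp
end

section
/- Let M be a deterministic n×n symmetric matrix with M ≠ 0, p ∈ (0,1), E = √((1−p)/p)·M∘C with C an n×n Bernoulli-type matrix with parameter p, and m_E a median of ‖E‖₂. Then E[ ‖E‖₂² ] ≤ m_E² + 32 ‖M‖_∞²/p² + 8 m_E √( 2π ‖M‖_∞² / p² ). -/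
open MeasureTheory ProbabilityTheory Filter Matrix
open scoped ENNReal NNReal BigOperators

/-!
Encode the on-or-above-diagonal entries of `C` as a point of the Boolean cube `{0,1}^pairs` with
product Bernoulli(`p`) law, so that `‖E‖₂` becomes a function `G` on the cube. For a symmetric
matrix, `‖A‖₂ = |vᵀ A v|` for some unit vector `v`; flipping the entry `(i, j)` changes `E` only in
the entries `(i, j), (j, i)`, by at most `‖M‖_∞ / p`, so it decreases `G` by at most
`2 ‖M‖_∞ |v_i| |v_j| / p`, and the squares of these decreases sum to at most `4 ‖M‖_∞² / p²`.
The one-sided Efron–Stein inequality on the biased cube turns this into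
`Var ‖E‖₂ ≤ 4 ‖M‖_∞² / p²`, and Chebyshev's inequality at the median gives
`E ‖E‖₂ ≤ m_E + √(2 Var)`. Hence `E ‖E‖₂² ≤ m_E² + 6 m_E ‖M‖_∞ / p + 13 ‖M‖_∞² / p²`,
which is below the claimed bound.
-/

open Finset Function

namespace BoolCube

variable {ι : Type*} [DecidableEq ι] (p : ℝ)

def patch (s t : Finset ι) (x : ι → Bool) : ι → Bool :=
  fun q => if q ∈ s then decide (q ∈ t) else x q

/-- `average p s f x` is the mean of `f` when the coordinates in `s` are redrawn independently,
`true` with probability `p`, and the others are kept from `x`; `patch s t x` is the point whose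
`s`-coordinates are the indicator of `t`. -/
noncomputable def average (s : Finset ι) (f : (ι → Bool) → ℝ) (x : ι → Bool) : ℝ :=
  ∑ t ∈ s.powerset, p ^ #t * (1 - p) ^ #(s \ t) * f (patch s t x)

variable {p}

@[simp]
lemma patch_empty (t : Finset ι) (x : ι → Bool) : patch ∅ t x = x :=
  funext fun _ => if_neg (notMem_empty _)

@[simp]
lemma average_empty (f : (ι → Bool) → ℝ) (x : ι → Bool) : average p ∅ f x = f x := by
  simp [average]

lemma patch_update {r : ι} {s : Finset ι} (hr : r ∉ s) (t : Finset ι) (b : Bool)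
    (x : ι → Bool) : patch s t (update x r b) = update (patch s t x) r b := by
  ext q
  rcases eq_or_ne q r with rfl | hq
  · simp [patch, hr]
  · simp [patch, hq]

lemma average_update {r : ι} {s : Finset ι} (hr : r ∉ s) (b : Bool) (f : (ι → Bool) → ℝ)
    (x : ι → Bool) : average p s f (update x r b) = average p s (fun z => f (update z r b)) x := by
  simp only [average, patch_update hr]

lemma average_insert {r : ι} {s : Finset ι} (hr : r ∉ s) (f : (ι → Bool) → ℝ) (x : ι → Bool) :
    average p (insert r s) f x
      = (1 - p) * average p s f (update x r false) + p * average p s f (update x r true) := by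
  simp only [average, sum_powerset_insert hr, mul_sum]
  congr 1 <;> refine sum_congr rfl fun t ht => ?_ <;> have hts := mem_powerset.1 ht
  · have hrt : r ∉ t := fun h => hr (hts h)
    have hpatch : patch (insert r s) t x = patch s t (update x r false) := by
      ext q; rcases eq_or_ne q r with rfl | hq <;> simp [patch, *]
    rw [hpatch, insert_sdiff_of_notMem _ hrt, card_insert_of_notMem (fun h => hr (mem_sdiff.1 h).1)]
    ring
  · have hrt : r ∉ t := fun h => hr (hts h)
    have hpatch : patch (insert r s) (insert r t) x = patch s t (update x r true) := by
      ext q; rcases eq_or_ne q r with rfl | hq <;> simp [patch, *]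
    rw [hpatch, insert_sdiff_insert, sdiff_insert_of_notMem hr, card_insert_of_notMem hrt]
    ring

lemma average_add (f g : (ι → Bool) → ℝ) (s : Finset ι) (x : ι → Bool) :
    average p s (fun z => f z + g z) x = average p s f x + average p s g x := by
  simp only [average, mul_add, sum_add_distrib]

lemma average_sub (f g : (ι → Bool) → ℝ) (s : Finset ι) (x : ι → Bool) :
    average p s (fun z => f z - g z) x = average p s f x - average p s g x := by
  simp only [average, mul_sub, sum_sub_distrib]

lemma average_const_mul (c : ℝ) (f : (ι → Bool) → ℝ) (s : Finset ι) (x : ι → Bool) :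
    average p s (fun z => c * f z) x = c * average p s f x := by
  simp only [average, mul_sum]
  exact sum_congr rfl fun _ _ => by ring

lemma average_sum {κ : Type*} (u : Finset κ) (f : κ → (ι → Bool) → ℝ) (s : Finset ι)
    (x : ι → Bool) : average p s (fun z => ∑ k ∈ u, f k z) x = ∑ k ∈ u, average p s (f k) x := by
  simp only [average, mul_sum]
  exact sum_comm

lemma average_mono (hp0 : 0 ≤ p) (hp1 : p ≤ 1) {f g : (ι → Bool) → ℝ} (hfg : ∀ z, f z ≤ g z)
    (s : Finset ι) (x : ι → Bool) : average p s f x ≤ average p s g x :=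
  sum_le_sum fun _ _ => mul_le_mul_of_nonneg_left (hfg _) (by bound)

lemma average_const (c : ℝ) (s : Finset ι) (x : ι → Bool) : average p s (fun _ => c) x = c := by
  induction s using Finset.induction_on generalizing x with
  | empty => simp
  | insert r s hr ih => rw [average_insert hr, ih, ih]; ring

lemma average_sq_sub_sq_insert {r : ι} {s : Finset ι} (hr : r ∉ s) (f : (ι → Bool) → ℝ)
    (x : ι → Bool) :
    average p (insert r s) (fun z => f z ^ 2) x - average p (insert r s) f x ^ 2
      = (1 - p) * (average p s (fun z => f z ^ 2) (update x r false)
          - average p s f (update x r false) ^ 2)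
        + p * (average p s (fun z => f z ^ 2) (update x r true)
          - average p s f (update x r true) ^ 2)
        + p * (1 - p)
          * (average p s f (update x r true) - average p s f (update x r false)) ^ 2 := by
  rw [average_insert hr, average_insert hr]
  ring

lemma sq_average_le (hp0 : 0 ≤ p) (hp1 : p ≤ 1) (f : (ι → Bool) → ℝ) (s : Finset ι)
    (x : ι → Bool) : average p s f x ^ 2 ≤ average p s (fun z => f z ^ 2) x := by
  induction s using Finset.induction_on generalizing x with
  | empty => simp
  | insert r s hr ih =>
    rw [← sub_nonneg, average_sq_sub_sq_insert hr]
    have h0 := sub_nonneg.2 (ih (update x r false))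
    have h1 := sub_nonneg.2 (ih (update x r true))
    have h1p : 0 ≤ 1 - p := by linarith
    positivity

lemma mul_sq_le_max_sq (hp0 : 0 ≤ p) (hp1 : p ≤ 1) (d : ℝ) :
    p * (1 - p) * d ^ 2 ≤ (1 - p) * max (-d) 0 ^ 2 + p * max d 0 ^ 2 := by
  have h1p : 0 ≤ 1 - p := by linarith
  rcases le_total d 0 with hd | hd
  · rw [max_eq_left (neg_nonneg.2 hd), max_eq_right hd]
    nlinarith [mul_nonneg (mul_nonneg h1p h1p) (sq_nonneg d)]
  · rw [max_eq_right (neg_nonpos.2 hd), max_eq_left hd]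
    nlinarith [mul_nonneg (mul_nonneg hp0 hp0) (sq_nonneg d)]

lemma mul_sq_sub_average_update_le (hp0 : 0 ≤ p) (hp1 : p ≤ 1) {r : ι} {s : Finset ι}
    (hr : r ∉ s) (f : (ι → Bool) → ℝ) (x : ι → Bool) :
    p * (1 - p) * (average p s f (update x r true) - average p s f (update x r false)) ^ 2
      ≤ average p (insert r s) (fun z => max (f z - f (update z r (!z r))) 0 ^ 2) x := by
  set d : (ι → Bool) → ℝ := fun z => f (update z r true) - f (update z r false)
  have hd : average p s f (update x r true) - average p s f (update x r false)
      = average p s d x := by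
    rw [average_update hr, average_update hr, average_sub]
  rw [hd, average_insert hr, average_update hr, average_update hr]
  simp only [update_self, Bool.not_false, Bool.not_true, update_idem]
  calc p * (1 - p) * average p s d x ^ 2
      ≤ p * (1 - p) * average p s (fun z => d z ^ 2) x :=
        mul_le_mul_of_nonneg_left (sq_average_le hp0 hp1 d s x) (by nlinarith)
    _ = average p s (fun z => p * (1 - p) * d z ^ 2) x := (average_const_mul _ _ _ _).symm
    _ ≤ average p s (fun z => (1 - p) * max (-d z) 0 ^ 2 + p * max (d z) 0 ^ 2) x :=
        average_mono hp0 hp1 (fun z => mul_sq_le_max_sq hp0 hp1 (d z)) s x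
    _ = _ := by
        rw [average_add, average_const_mul, average_const_mul]
        simp only [d, neg_sub]

/-- One-sided Efron–Stein inequality. -/
theorem average_sq_sub_sq_le_sum (hp0 : 0 ≤ p) (hp1 : p ≤ 1) (f : (ι → Bool) → ℝ)
    (s : Finset ι) (x : ι → Bool) :
    average p s (fun z => f z ^ 2) x - average p s f x ^ 2
      ≤ ∑ q ∈ s, average p s (fun z => max (f z - f (update z q (!z q))) 0 ^ 2) x := by
  induction s using Finset.induction_on generalizing x with
  | empty => simp
  | insert r s hr ih =>
    have hsum : ∑ q ∈ s, average p (insert r s)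
          (fun z => max (f z - f (update z q (!z q))) 0 ^ 2) x
        = (1 - p) * ∑ q ∈ s, average p s (fun z => max (f z - f (update z q (!z q))) 0 ^ 2)
            (update x r false)
          + p * ∑ q ∈ s, average p s (fun z => max (f z - f (update z q (!z q))) 0 ^ 2)
            (update x r true) := by
      simp only [average_insert hr, sum_add_distrib, mul_sum]
    rw [average_sq_sub_sq_insert hr, sum_insert hr, hsum]
    have h1p : 0 ≤ 1 - p := by linarith
    linarith [mul_sq_sub_average_update_le hp0 hp1 hr f x,
      mul_le_mul_of_nonneg_left (ih (update x r false)) h1p,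
      mul_le_mul_of_nonneg_left (ih (update x r true)) hp0]

variable [Fintype ι]

variable (p) in
noncomputable def mass (x : ι → Bool) : ℝ := ∏ q, if x q then p else 1 - p

lemma sum_mass_mul_eq_average (f : (ι → Bool) → ℝ) (x₀ : ι → Bool) :
    ∑ x, mass p x * f x = average p univ f x₀ := by
  symm
  refine sum_nbij' (fun t q => decide (q ∈ t)) (fun x => univ.filter fun q => x q)
    (by simp) (by simp) (fun t _ => by ext q; simp) (fun x _ => by ext q; simp) fun t _ => ?_
  have hpatch : patch univ t x₀ = fun q => decide (q ∈ t) := by ext q; simp [patch]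
  simp [hpatch, mass, prod_ite, filter_not]

theorem sum_mass_mul_sq_sub_sq_le (hp0 : 0 ≤ p) (hp1 : p ≤ 1) {f : (ι → Bool) → ℝ} {B : ℝ}
    (hB : ∀ x, ∑ q, max (f x - f (update x q (!x q))) 0 ^ 2 ≤ B) :
    ∑ x, mass p x * f x ^ 2 - (∑ x, mass p x * f x) ^ 2 ≤ B := by
  let x₀ : ι → Bool := fun _ => true
  rw [sum_mass_mul_eq_average _ x₀, sum_mass_mul_eq_average f x₀]
  calc _ ≤ ∑ q, average p univ (fun z => max (f z - f (update z q (!z q))) 0 ^ 2) x₀ :=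
        average_sq_sub_sq_le_sum hp0 hp1 f univ x₀
    _ = average p univ (fun z => ∑ q, max (f z - f (update z q (!z q))) 0 ^ 2) x₀ :=
        (average_sum _ _ _ _).symm
    _ ≤ average p univ (fun _ => B) x₀ := average_mono hp0 hp1 hB _ _
    _ = B := average_const _ _ _

end BoolCube

lemma ContinuousLinearMap.exists_norm_le_one_opNorm_le_abs_inner {E : Type*}
    [NormedAddCommGroup E] [InnerProductSpace ℝ E] [FiniteDimensional ℝ E] (T : E →L[ℝ] E)
    (hT : (T : E →ₗ[ℝ] E).IsSymmetric) : ∃ v : E, ‖v‖ ≤ 1 ∧ ‖T‖ ≤ |inner ℝ (T v) v| := by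
  obtain ⟨v, hv, hmax⟩ := (isCompact_closedBall (0 : E) 1).exists_isMaxOn
    ⟨0, Metric.mem_closedBall_self zero_le_one⟩ (f := fun v => |inner ℝ (T v) v|)
    (by fun_prop)
  refine ⟨v, mem_closedBall_zero_iff.1 hv, ?_⟩
  rw [T.norm_eq_iSup_rayleighQuotient hT]
  refine ciSup_le fun x => ?_
  rcases eq_or_ne x 0 with rfl | hx
  · simp
  have hx' : ‖x‖⁻¹ ≠ 0 := inv_ne_zero (norm_ne_zero_iff.2 hx)
  have hu1 : ‖‖x‖⁻¹ • x‖ = 1 := by simp [norm_smul, hx]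
  rw [← T.rayleigh_smul x hx', rayleighQuotient, reApplyInnerSelf_apply, hu1]
  simpa using hmax (mem_closedBall_zero_iff.2 hu1.le)

section SpectralNorm

variable {m : Type*} [Fintype m] [DecidableEq m]

lemma inner_toEuclideanLin_self (A : Matrix m m ℝ) (w : EuclideanSpace ℝ m) :
    inner ℝ (Matrix.toEuclideanLin A w) w = w.ofLp ⬝ᵥ A *ᵥ w.ofLp := by
  simp [EuclideanSpace.inner_eq_star_dotProduct]

lemma exists_forall_matSpectralNorm_sub_le {A : Matrix m m ℝ} (hA : A.IsSymm) :
    ∃ v : m → ℝ, ∑ i, v i ^ 2 ≤ 1 ∧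
      ∀ B : Matrix m m ℝ, matSpectralNorm A - matSpectralNorm B ≤ |v ⬝ᵥ (A - B) *ᵥ v| := by
  have hsymm : (Matrix.toEuclideanLin A).IsSymmetric :=
    Matrix.isSymmetric_toEuclideanLin_iff.2 (by simpa [Matrix.IsHermitian] using hA.eq)
  obtain ⟨w, hw, hwA⟩ := (LinearMap.toContinuousLinearMap (Matrix.toEuclideanLin A))
    |>.exists_norm_le_one_opNorm_le_abs_inner hsymm
  refine ⟨w.ofLp, ?_, fun B => ?_⟩
  · have hnorm := EuclideanSpace.norm_sq_eq w
    simp only [Real.norm_eq_abs, sq_abs] at hnorm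
    rw [← hnorm]
    exact pow_le_one₀ (norm_nonneg w) hw
  have hB : |inner ℝ (Matrix.toEuclideanLin B w) w| ≤ matSpectralNorm B :=
    calc _ ≤ ‖(LinearMap.toContinuousLinearMap (Matrix.toEuclideanLin B)) w‖ * ‖w‖ :=
          abs_real_inner_le_norm _ _
      _ ≤ matSpectralNorm B * 1 * 1 :=
          mul_le_mul (ContinuousLinearMap.le_opNorm_of_le _ hw) hw (norm_nonneg _)
            (by unfold matSpectralNorm; positivity)
      _ = matSpectralNorm B := by ring
  simp only [LinearMap.coe_toContinuousLinearMap'] at hwA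
  rw [inner_toEuclideanLin_self] at hwA hB
  rw [Matrix.sub_mulVec, dotProduct_sub]
  have := abs_sub_abs_le_abs_sub (w.ofLp ⬝ᵥ A *ᵥ w.ofLp) (w.ofLp ⬝ᵥ B *ᵥ w.ofLp)
  unfold matSpectralNorm at hB ⊢
  linarith

lemma abs_dotProduct_mulVec_le_of_support {D : Matrix m m ℝ} {i j : m} {d : ℝ}
    (hsupp : ∀ k l, D k l ≠ 0 → (k = i ∧ l = j) ∨ (k = j ∧ l = i)) (hd : ∀ k l, |D k l| ≤ d)
    (v : m → ℝ) : |v ⬝ᵥ D *ᵥ v| ≤ 2 * d * |v i| * |v j| := by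
  have hd0 : 0 ≤ d := (abs_nonneg _).trans (hd i i)
  set w : m → m → ℝ := fun k l => (if k = i ∧ l = j then 1 else 0) + if k = j ∧ l = i then 1 else 0
  have hpt : ∀ k l, |D k l| ≤ d * w k l := by
    intro k l
    by_cases h : D k l = 0
    · rw [h, abs_zero]; positivity
    · have h1 : 1 ≤ w k l := by
        rcases hsupp k l h with hkl | hkl <;> simp only [w, hkl, and_self, if_true] <;>
          split_ifs <;> norm_num
      nlinarith [hd k l]
  calc |v ⬝ᵥ D *ᵥ v| ≤ ∑ k, ∑ l, |v k| * |D k l| * |v l| := by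
        simp only [dotProduct, Matrix.mulVec, mul_sum]
        refine (abs_sum_le_sum_abs _ _).trans (sum_le_sum fun k _ => ?_)
        refine (abs_sum_le_sum_abs _ _).trans (sum_le_sum fun l _ => ?_)
        rw [abs_mul, abs_mul, mul_assoc]
    _ ≤ ∑ k, ∑ l, |v k| * (d * w k l) * |v l| := by
        gcongr with k _ l _
        exact hpt k l
    _ = 2 * d * |v i| * |v j| := by
        simp [w, mul_add, add_mul, sum_add_distrib, ite_and]
        ring

end SpectralNorm

lemma supNorm_nonneg {m n : Type*} [Fintype m] [Fintype n] (A : Matrix m n ℝ) :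
    0 ≤ supNorm A :=
  norm_nonneg _

lemma abs_le_supNorm {m n : Type*} [Fintype m] [Fintype n] (A : Matrix m n ℝ) (i : m) (j : n) :
    |A i j| ≤ supNorm A :=
  calc |A i j| = ‖A i j‖ := (Real.norm_eq_abs _).symm
    _ ≤ ‖fun j => A i j‖ := norm_le_pi_norm (fun j => A i j) j
    _ ≤ supNorm A := norm_le_pi_norm (fun i j => A i j) i

section UpperEntries

variable {α : Type*} [LinearOrder α]

def upperIndex (i j : α) : {q : α × α // q.1 ≤ q.2} :=
  if h : i ≤ j then ⟨(i, j), h⟩ else ⟨(j, i), le_of_not_ge h⟩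

lemma upperIndex_comm (i j : α) : upperIndex i j = upperIndex j i := by
  rcases lt_trichotomy i j with h | rfl | h
  · simp [upperIndex, h.le, not_le.2 h]
  · rfl
  · simp [upperIndex, h.le, not_le.2 h]

lemma eq_or_eq_of_upperIndex_eq {i j : α} {q : {q : α × α // q.1 ≤ q.2}}
    (h : upperIndex i j = q) : (i = q.1.1 ∧ j = q.1.2) ∨ (i = q.1.2 ∧ j = q.1.1) := by
  subst h
  unfold upperIndex
  split_ifs <;> simp

def symmOfUpper (y : {q : α × α // q.1 ≤ q.2} → ℝ) : Matrix α α ℝ :=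
  Matrix.of fun i j => y (upperIndex i j)

lemma symmOfUpper_isSymm (y : {q : α × α // q.1 ≤ q.2} → ℝ) : (symmOfUpper y).IsSymm :=
  Matrix.IsSymm.ext fun i j => by simp [symmOfUpper, upperIndex_comm]

lemma Matrix.IsSymm.apply_upperIndex {A : Matrix α α ℝ} (hA : A.IsSymm) (i j : α) :
    A (upperIndex i j).1.1 (upperIndex i j).1.2 = A i j := by
  unfold upperIndex
  split_ifs
  · rfl
  · exact hA.apply i j

variable [Fintype α]

lemma sum_upper_sq_mul_sq_le (v : α → ℝ) :
    ∑ q : {q : α × α // q.1 ≤ q.2}, v q.1.1 ^ 2 * v q.1.2 ^ 2 ≤ (∑ i, v i ^ 2) ^ 2 := by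
  rw [sq, sum_mul_sum, ← Fintype.sum_prod_type',
    ← sum_subtype (univ.filter fun q : α × α => q.1 ≤ q.2) (by simp)
      (fun q : α × α => v q.1 ^ 2 * v q.2 ^ 2)]
  exact sum_le_univ_sum_of_nonneg fun _ => by positivity

lemma exists_forall_matSpectralNorm_hadamard_update_le {M : Matrix α α ℝ} (hM : M.IsSymm)
    (y : {q : α × α // q.1 ≤ q.2} → ℝ) :
    ∃ v : α → ℝ, ∑ i, v i ^ 2 ≤ 1 ∧ ∀ q t,
      matSpectralNorm (M ⊙ symmOfUpper y) - matSpectralNorm (M ⊙ symmOfUpper (update y q t))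
        ≤ 2 * (supNorm M * |y q - t|) * |v q.1.1| * |v q.1.2| := by
  have hsymm : (M ⊙ symmOfUpper y).IsSymm := by
    simp only [Matrix.IsSymm, Matrix.transpose_hadamard, hM.eq, (symmOfUpper_isSymm y).eq]
  obtain ⟨v, hv, hgap⟩ := exists_forall_matSpectralNorm_sub_le hsymm
  refine ⟨v, hv, fun q t => (hgap _).trans (abs_dotProduct_mulVec_le_of_support ?_ ?_ v)⟩
  · intro k l hkl
    by_contra hne
    refine hkl ?_
    have : upperIndex k l ≠ q := fun h => hne (eq_or_eq_of_upperIndex_eq h)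
    simp [symmOfUpper, this]
  · intro k l
    simp only [Matrix.sub_apply, Matrix.hadamard_apply, symmOfUpper, Matrix.of_apply, ← mul_sub,
      abs_mul]
    rcases eq_or_ne (upperIndex k l) q with rfl | hne
    · simp only [update_self]
      exact mul_le_mul_of_nonneg_right (abs_le_supNorm M k l) (abs_nonneg _)
    · simp only [update_of_ne hne, sub_self, abs_zero, mul_zero]
      exact mul_nonneg (supNorm_nonneg M) (abs_nonneg _)

theorem sum_sq_max_matSpectralNorm_sub_flip_le {M : Matrix α α ℝ} (hM : M.IsSymm)
    (φ : Bool → ℝ) (x : {q : α × α // q.1 ≤ q.2} → Bool) :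
    ∑ q, max (matSpectralNorm (M ⊙ symmOfUpper (φ ∘ x))
        - matSpectralNorm (M ⊙ symmOfUpper (φ ∘ update x q (!x q)))) 0 ^ 2
      ≤ 4 * (supNorm M * |φ true - φ false|) ^ 2 := by
  obtain ⟨v, hv, hgap⟩ := exists_forall_matSpectralNorm_hadamard_update_le hM (φ ∘ x)
  set c := supNorm M * |φ true - φ false|
  have hc : 0 ≤ c := mul_nonneg (supNorm_nonneg M) (abs_nonneg _)
  have hq : ∀ q, max (matSpectralNorm (M ⊙ symmOfUpper (φ ∘ x))
        - matSpectralNorm (M ⊙ symmOfUpper (φ ∘ update x q (!x q)))) 0 ^ 2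
      ≤ 4 * c ^ 2 * (v q.1.1 ^ 2 * v q.1.2 ^ 2) := by
    intro q
    have hflip : |(φ ∘ x) q - φ (!x q)| = |φ true - φ false| := by
      rw [Function.comp_apply]; cases x q <;> simp [abs_sub_comm]
    have h := hgap q (φ (!x q))
    rw [← comp_update, hflip] at h
    calc _ ≤ (2 * c * |v q.1.1| * |v q.1.2|) ^ 2 :=
          pow_le_pow_left₀ (le_max_right _ _) (max_le h (by positivity)) 2
      _ = 4 * c ^ 2 * (v q.1.1 ^ 2 * v q.1.2 ^ 2) := by simp only [mul_pow, sq_abs]; ring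
  have hv0 : 0 ≤ ∑ i, v i ^ 2 := by positivity
  calc _ ≤ ∑ q : {q : α × α // q.1 ≤ q.2}, 4 * c ^ 2 * (v q.1.1 ^ 2 * v q.1.2 ^ 2) :=
        sum_le_sum fun q _ => hq q
    _ = 4 * c ^ 2 * ∑ q : {q : α × α // q.1 ≤ q.2}, v q.1.1 ^ 2 * v q.1.2 ^ 2 :=
        (mul_sum _ _ _).symm
    _ ≤ 4 * c ^ 2 * (∑ i, v i ^ 2) ^ 2 := by gcongr; exact sum_upper_sq_mul_sq_le v
    _ ≤ 4 * c ^ 2 := by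
        have : (∑ i, v i ^ 2) ^ 2 ≤ 1 := pow_le_one₀ hv0 hv
        nlinarith [sq_nonneg c]

end UpperEntries

section BernoulliPattern

variable {Ω : Type*} [MeasurableSpace Ω] {P : Measure Ω} {ι : Type*} {Z : ι → Ω → ℝ} {a b p : ℝ}

lemma measurable_decide_eq (hZ : ∀ q, Measurable (Z q)) :
    Measurable fun ω q => decide (Z q ω = a) :=
  measurable_pi_lambda _ fun q => measurable_to_bool <| by
    convert hZ q (measurableSet_singleton a) using 1
    ext; simp

variable [IsProbabilityMeasure P] [Fintype ι]

lemma memLp_comp_decide_eq (hZm : ∀ q, Measurable (Z q)) (g : (ι → Bool) → ℝ) :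
    MemLp (fun ω => g (fun q => decide (Z q ω = a))) 2 P :=
  (memLp_map_measure_iff Measurable.of_discrete.aestronglyMeasurable
    (measurable_decide_eq hZm).aemeasurable).1 MemLp.of_discrete

lemma measureReal_decide_eq (hZ : iIndepFun Z P) (hZm : ∀ q, Measurable (Z q))
    (ha : ∀ q, P {ω | Z q ω = a} = ENNReal.ofReal p) (hp0 : 0 ≤ p) (hp1 : p ≤ 1)
    (x : ι → Bool) :
    P.real {ω | (fun q => decide (Z q ω = a)) = x} = BoolCube.mass p x := by
  let sets : ι → Set ℝ := fun q => if x q then {a} else {a}ᶜ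
  have hsets : ∀ q, MeasurableSet (sets q) := fun q => by
    by_cases h : x q <;> simp [sets, h, (measurableSet_singleton a).compl]
  have hpre : {ω | (fun q => decide (Z q ω = a)) = x}
      = ⋂ q ∈ (univ : Finset ι), Z q ⁻¹' sets q := by
    ext ω
    simp only [Set.mem_ofPred_eq, funext_iff, Set.mem_iInter, Set.mem_preimage, mem_univ,
      true_implies]
    refine forall_congr' fun q => ?_
    by_cases h : x q <;> simp [sets, h]
  have hfactor : ∀ q, P (Z q ⁻¹' sets q) = ENNReal.ofReal (if x q then p else 1 - p) := by
    intro q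
    by_cases h : x q
    · simp only [sets, h, if_true]
      exact ha q
    · have hm : MeasurableSet (Z q ⁻¹' {a}) := hZm q (measurableSet_singleton a)
      simp only [sets, h, Bool.false_eq_true, if_false, Set.preimage_compl,
        prob_compl_eq_one_sub hm]
      rw [show Z q ⁻¹' {a} = {ω | Z q ω = a} from rfl, ha q, ENNReal.ofReal_sub _ hp0,
        ENNReal.ofReal_one]
  rw [measureReal_def, hpre, hZ.measure_inter_preimage_eq_mul univ fun q _ => hsets q,
    ENNReal.toReal_prod, BoolCube.mass]
  refine prod_congr rfl fun q _ => ?_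
  rw [hfactor, ENNReal.toReal_ofReal]
  split_ifs <;> linarith

lemma integral_comp_decide_eq [DecidableEq ι] (hZ : iIndepFun Z P) (hZm : ∀ q, Measurable (Z q))
    (ha : ∀ q, P {ω | Z q ω = a} = ENNReal.ofReal p) (hp0 : 0 ≤ p) (hp1 : p ≤ 1)
    (g : (ι → Bool) → ℝ) :
    ∫ ω, g (fun q => decide (Z q ω = a)) ∂P = ∑ x, BoolCube.mass p x * g x := by
  have hY := measurable_decide_eq (a := a) hZm
  rw [← integral_map hY.aemeasurable Measurable.of_discrete.aestronglyMeasurable,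
    integral_fintype .of_finite]
  refine sum_congr rfl fun x _ => ?_
  rw [map_measureReal_apply hY (measurableSet_singleton x), smul_eq_mul,
    ← measureReal_decide_eq hZ hZm ha hp0 hp1 x]
  rfl

theorem variance_comp_decide_le [DecidableEq ι] (hZ : iIndepFun Z P) (hZm : ∀ q, Measurable (Z q))
    (ha : ∀ q, P {ω | Z q ω = a} = ENNReal.ofReal p) (hp0 : 0 ≤ p) (hp1 : p ≤ 1)
    {g : (ι → Bool) → ℝ} {B : ℝ}
    (hB : ∀ x, ∑ q, max (g x - g (update x q (!x q))) 0 ^ 2 ≤ B) :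
    variance (fun ω => g (fun q => decide (Z q ω = a))) P ≤ B := by
  rw [variance_eq_sub (memLp_comp_decide_eq hZm g)]
  simp only [Pi.pow_apply]
  rw [integral_comp_decide_eq hZ hZm ha hp0 hp1 (fun x => g x ^ 2),
    integral_comp_decide_eq hZ hZm ha hp0 hp1]
  exact BoolCube.sum_mass_mul_sq_sub_sq_le hp0 hp1 hB

lemma ae_forall_eq_or_eq (ha : ∀ q, P {ω | Z q ω = a} = ENNReal.ofReal p)
    (hb : ∀ q, P {ω | Z q ω = b} = ENNReal.ofReal (1 - p)) (hZm : ∀ q, Measurable (Z q))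
    (hab : a ≠ b) (hp0 : 0 ≤ p) (hp1 : p ≤ 1) : ∀ᵐ ω ∂P, ∀ q, Z q ω = a ∨ Z q ω = b := by
  refine ae_all_iff.2 fun q => ?_
  have hma : MeasurableSet {ω | Z q ω = a} := hZm q (measurableSet_singleton a)
  have hmb : MeasurableSet {ω | Z q ω = b} := hZm q (measurableSet_singleton b)
  have hdisj : Disjoint {ω | Z q ω = a} {ω | Z q ω = b} :=
    Set.disjoint_left.2 fun ω h1 h2 => hab (h1.symm.trans h2)
  have hunion : P ({ω | Z q ω = a} ∪ {ω | Z q ω = b}) = 1 := by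
    rw [measure_union hdisj hmb, ha, hb, ← ENNReal.ofReal_add hp0 (by linarith)]
    simp
  have hcompl : {ω | ¬(Z q ω = a ∨ Z q ω = b)} = ({ω | Z q ω = a} ∪ {ω | Z q ω = b})ᶜ := by
    ext; simp
  rw [ae_iff, hcompl, prob_compl_eq_zero_iff (hma.union hmb)]
  exact hunion

end BernoulliPattern

section Median

variable {Ω : Type*} [MeasurableSpace Ω] {P : Measure Ω} {X : Ω → ℝ} {m : ℝ}

lemma nonneg_of_half_le_measure_le (hX : 0 ≤ᵐ[P] X) (hm : 1 / 2 ≤ P {ω | X ω ≤ m}) :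
    0 ≤ m := by
  by_contra! h
  have hnull : P {ω | X ω ≤ m} = 0 :=
    measure_mono_null (fun ω hω => not_le.2 (lt_of_le_of_lt hω h)) (ae_iff.1 hX)
  rw [hnull] at hm
  norm_num at hm

variable [IsProbabilityMeasure P]

lemma integral_le_add_sqrt_two_mul_variance (hX : MemLp X 2 P) (hm : 1 / 2 ≤ P {ω | X ω ≤ m}) :
    P[X] ≤ m + √(2 * variance X P) := by
  by_contra! h
  have hc : 0 < P[X] - m := by linarith [Real.sqrt_nonneg (2 * variance X P)]
  have hsub : {ω | X ω ≤ m} ⊆ {ω | P[X] - m ≤ |X ω - P[X]|} := fun ω (hω : X ω ≤ m) => by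
    change P[X] - m ≤ |X ω - P[X]|
    rw [abs_sub_comm]
    exact le_abs.2 (Or.inl (by linarith))
  have hcheb := hm.trans ((measure_mono hsub).trans (meas_ge_le_variance_div_sq hX hc))
  rw [show (1 : ℝ≥0∞) / 2 = ENNReal.ofReal (1 / 2) by simp,
    ENNReal.ofReal_le_ofReal_iff (by have := variance_nonneg X P; positivity),
    le_div_iff₀ (by positivity)] at hcheb
  have : P[X] - m ≤ √(2 * variance X P) :=
    (Real.le_sqrt hc.le (by have := variance_nonneg X P; positivity)).2 (by linarith)
  linarith

theorem integral_sq_le_of_half_le_measure_le (hX : MemLp X 2 P) (hX0 : 0 ≤ᵐ[P] X)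
    (hm : 1 / 2 ≤ P {ω | X ω ≤ m}) {V : ℝ} (hV : variance X P ≤ V) :
    ∫ ω, X ω ^ 2 ∂P ≤ V + (m + √(2 * V)) ^ 2 := by
  have hmean : P[X] ≤ m + √(2 * V) :=
    (integral_le_add_sqrt_two_mul_variance hX hm).trans (by gcongr)
  have hsq : P[X] ^ 2 ≤ (m + √(2 * V)) ^ 2 :=
    pow_le_pow_left₀ (integral_nonneg_of_ae hX0) hmean 2
  have := variance_eq_sub hX
  simp only [Pi.pow_apply] at this
  linarith

end Median

/-- The value of `√((1 - p) / p) * C i j` when `C i j` is the upper value `√((1 - p) / p)`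
(`true`) or the lower value `-√(p / (1 - p))` (`false`). -/
noncomputable def scaledBernoulli (p : ℝ) (b : Bool) : ℝ := if b then (1 - p) / p else -1

lemma abs_scaledBernoulli_true_sub_false {p : ℝ} (hp : 0 < p) :
    |scaledBernoulli p true - scaledBernoulli p false| = 1 / p := by
  rw [scaledBernoulli, scaledBernoulli, if_pos rfl, if_neg Bool.false_ne_true, sub_neg_eq_add,
    div_add_one hp.ne', sub_add_cancel, abs_of_pos (one_div_pos.2 hp)]

lemma sqrt_div_mul_sqrt_div_one_sub {p : ℝ} (hp0 : 0 < p) (hp1 : p < 1) :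
    √((1 - p) / p) * √(p / (1 - p)) = 1 := by
  have h1p : 0 < 1 - p := by linarith
  rw [← Real.sqrt_mul (by positivity), div_mul_div_comm, mul_comm (1 - p) p,
    div_self (by positivity), Real.sqrt_one]

section BernoulliType

variable {Ω : Type*} [MeasurableSpace Ω] {P : Measure Ω} [IsProbabilityMeasure P] {n : ℕ}
  {p : ℝ} {C : Ω → Matrix (Fin n) (Fin n) ℝ}

lemma IsBernoulliType.ae_smul_hadamard_eq (hC : IsBernoulliType P p C) (hp0 : 0 < p)
    (hp1 : p < 1) (M : Matrix (Fin n) (Fin n) ℝ) :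
    ∀ᵐ ω ∂P, √((1 - p) / p) • M ⊙ C ω
      = M ⊙ symmOfUpper
        (scaledBernoulli p ∘ fun q => decide (C ω q.1.1 q.1.2 = √((1 - p) / p))) := by
  obtain ⟨hCsymm, hCmeas, -, hClaw⟩ := hC
  have hne : √((1 - p) / p) ≠ -√(p / (1 - p)) := by
    have : 0 < √((1 - p) / p) := Real.sqrt_pos.2 (div_pos (by linarith) hp0)
    linarith [Real.sqrt_nonneg (p / (1 - p))]
  filter_upwards [ae_forall_eq_or_eq (Z := fun (q : {q : Fin n × Fin n // q.1 ≤ q.2}) ω => C ω q.1.1 q.1.2)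
    (fun q => (hClaw _ _ q.2).1) (fun q => (hClaw _ _ q.2).2) (fun q => hCmeas q.1.1 q.1.2) hne
    hp0.le hp1.le] with ω hω
  ext i j
  simp only [Matrix.smul_apply, Matrix.hadamard_apply, symmOfUpper, Matrix.of_apply, smul_eq_mul,
    Function.comp_apply, scaledBernoulli, ← (hCsymm ω).apply_upperIndex i j]
  rcases hω (upperIndex i j) with h | h
  · rw [h, if_pos (decide_eq_true rfl)]
    linear_combination M i j * Real.mul_self_sqrt (div_nonneg (by linarith : 0 ≤ 1 - p) hp0.le)
  · rw [h, decide_eq_false hne.symm, if_neg Bool.false_ne_true]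
    linear_combination -M i j * sqrt_div_mul_sqrt_div_one_sub hp0 hp1

lemma IsBernoulliType.variance_le (hC : IsBernoulliType P p C) (hp0 : 0 < p) (hp1 : p < 1)
    {M : Matrix (Fin n) (Fin n) ℝ} (hM : M.IsSymm) :
    variance (fun ω => matSpectralNorm (M ⊙ symmOfUpper
      (scaledBernoulli p ∘ fun q => decide (C ω q.1.1 q.1.2 = √((1 - p) / p))))) P
      ≤ 4 * (supNorm M / p) ^ 2 := by
  obtain ⟨-, hCmeas, hCindep, hClaw⟩ := hC
  refine variance_comp_decide_le (g := fun x => matSpectralNorm (M ⊙ symmOfUpper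
    (scaledBernoulli p ∘ x))) hCindep (fun q => hCmeas _ _) (fun q => (hClaw _ _ q.2).1)
    hp0.le hp1.le fun x => ?_
  rw [div_eq_mul_one_div, ← abs_scaledBernoulli_true_sub_false hp0]
  exact sum_sq_max_matSpectralNorm_sub_flip_le hM _ x

end BernoulliType

lemma four_mul_sq_add_sq_le {m S p : ℝ} (hm : 0 ≤ m) (hS : 0 ≤ S) (hp : 0 < p) :
    4 * (S / p) ^ 2 + (m + √(2 * (4 * (S / p) ^ 2))) ^ 2
      ≤ m ^ 2 + 32 * S ^ 2 / p ^ 2 + 8 * m * √(2 * Real.pi * S ^ 2 / p ^ 2) := by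
  set d := S / p
  have hd : 0 ≤ d := div_nonneg hS hp.le
  have hsqrt8 : √(2 * (4 * d ^ 2)) ≤ 3 * d := Real.sqrt_le_iff.2 ⟨by positivity, by nlinarith⟩
  have hsqrtπ : d ≤ √(2 * Real.pi * S ^ 2 / p ^ 2) := by
    rw [Real.le_sqrt hd (by positivity),
      show 2 * Real.pi * S ^ 2 / p ^ 2 = 2 * Real.pi * d ^ 2 by rw [div_pow]; ring]
    nlinarith [Real.pi_gt_three, sq_nonneg d]
  have hsq : (m + √(2 * (4 * d ^ 2))) ^ 2 ≤ (m + 3 * d) ^ 2 :=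
    pow_le_pow_left₀ (by positivity) (by linarith) 2
  rw [show 32 * S ^ 2 / p ^ 2 = 32 * d ^ 2 by rw [div_pow]; ring]
  nlinarith [mul_le_mul_of_nonneg_left hsqrtπ hm, mul_nonneg hm hd]

theorem hadamard_residual_opNorm_second_moment_general
    {Ω : Type*} [MeasurableSpace Ω] (P : Measure Ω) [IsProbabilityMeasure P]
    {n : ℕ} (M : Matrix (Fin n) (Fin n) ℝ) (p : ℝ)
    (C : Ω → Matrix (Fin n) (Fin n) ℝ) (E : Ω → Matrix (Fin n) (Fin n) ℝ) (mE : ℝ)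
    (hMsymm : M.IsSymm) (hp0 : 0 < p) (hp1 : p < 1)
    (hC : IsBernoulliType P p C)
    (hEdef : ∀ ω, E ω = Real.sqrt ((1 - p) / p) • Matrix.hadamard M (C ω))
    (hm1 : (1 : ℝ≥0∞) / 2 ≤ P {ω | matSpectralNorm (E ω) ≤ mE}) :
    (∫ ω, matSpectralNorm (E ω) ^ 2 ∂P) ≤
      mE ^ 2 + 32 * supNorm M ^ 2 / p ^ 2 +
        8 * mE * Real.sqrt (2 * Real.pi * supNorm M ^ 2 / p ^ 2) := by
  set G : ({q : Fin n × Fin n // q.1 ≤ q.2} → Bool) → ℝ :=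
    fun x => matSpectralNorm (M ⊙ symmOfUpper (scaledBernoulli p ∘ x))
  set X : Ω → ℝ := fun ω => G fun q => decide (C ω q.1.1 q.1.2 = √((1 - p) / p))
  have hEX : (fun ω => matSpectralNorm (E ω)) =ᵐ[P] X := by
    filter_upwards [hC.ae_smul_hadamard_eq hp0 hp1 M] with ω hω
    rw [hEdef, hω]
  have hX0 : 0 ≤ᵐ[P] X := ae_of_all _ fun _ => norm_nonneg _
  have hmX : 1 / 2 ≤ P {ω | X ω ≤ mE} := hm1.trans_eq (measure_congr (hEX.fun_comp (· ≤ mE)))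
  have hXmem : MemLp X 2 P := memLp_comp_decide_eq (fun q => hC.2.1 _ _) G
  calc ∫ ω, matSpectralNorm (E ω) ^ 2 ∂P = ∫ ω, X ω ^ 2 ∂P :=
        integral_congr_ae (hEX.fun_comp (· ^ 2))
    _ ≤ 4 * (supNorm M / p) ^ 2 + (mE + √(2 * (4 * (supNorm M / p) ^ 2))) ^ 2 :=
        integral_sq_le_of_half_le_measure_le hXmem hX0 hmX (hC.variance_le hp0 hp1 hMsymm)
    _ ≤ _ := four_mul_sq_add_sq_le (nonneg_of_half_le_measure_le hX0 hmX) (supNorm_nonneg M) hp0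

/-- Theorem A-2 of the paper, second moment: bound on `E[‖E‖₂²]`. -/
theorem hadamard_residual_opNorm_second_moment
    {Ω : Type*} [MeasurableSpace Ω] (P : Measure Ω) [IsProbabilityMeasure P]
    {n : ℕ} (M : Matrix (Fin n) (Fin n) ℝ) (p : ℝ)
    (C : Ω → Matrix (Fin n) (Fin n) ℝ) (E : Ω → Matrix (Fin n) (Fin n) ℝ) (mE : ℝ)
    (hMsymm : M.IsSymm) (hM0 : M ≠ 0) (hp0 : 0 < p) (hp1 : p < 1)
    (hC : IsBernoulliType P p C)
    (hEdef : ∀ ω, E ω = Real.sqrt ((1 - p) / p) • Matrix.hadamard M (C ω))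
    (hm1 : (1 : ℝ≥0∞) / 2 ≤ P {ω | matSpectralNorm (E ω) ≤ mE})
    (hm2 : (1 : ℝ≥0∞) / 2 ≤ P {ω | mE ≤ matSpectralNorm (E ω)}) :
    (∫ ω, matSpectralNorm (E ω) ^ 2 ∂P) ≤
      mE ^ 2 + 32 * supNorm M ^ 2 / p ^ 2 +
        8 * mE * Real.sqrt (2 * Real.pi * supNorm M ^ 2 / p ^ 2) :=
  hadamard_residual_opNorm_second_moment_general P M p C E mE hMsymm hp0 hp1 hC hEdef hm1
end
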